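/- If the planar 3-SAT formula φ is satisfiable, then the constructed 3-plane drawing Γ_φ admits a SPED of ink exactly L, where L counts 10 for each red-green segment pair in a variable gadget, 6 for each red-green segment pair in a wire, and 12 for each clause gadget; conversely, if Γ_φ has a SPED with ink at least L, then every red-green pair and every clause gadget attains its maximum contribution, forcing each variable gadget into one of its two states. -/

import Mathlib

/-! STATEMENT 17: correctness of the NP-hardness reduction for MaxSPED (Theorem 1).

We model the constructed 3-plane drawing `Γ_φ` of a planar 3-SAT formula `φ` at the level
of its segments, lengths and crossing distances (a SPED only depends on these data).
The formula has `n` variables and `m` clauses, clause `j`'s `k`-th literal being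
`lit j k = (variable, polarity)`.

Segments of `Γ_φ`:
* for each occurrence `(j,k)` a red-green pair of variable-gadget segments of length 8
  (the variable gadget of `x` is a cycle of these pairs over all occurrences of `x`,
  consecutive pairs being given by a permutation `π` that is a cycle on the occurrences
  of each variable);
* for each occurrence a wire consisting of a red-green pair of segments of length 4;
* for each clause three pairwise crossing segments of length 8.

All red-green crossings and clause-triangle crossings are at distance 1 from an endpoint
of each involved segment; the first wire segment crosses the corresponding variable
segment (green for a positive literal, red for a negative one) splitting it 3:5, and the
last wire segment crosses the corresponding clause segment splitting it 3:5.

A SPED assigns to each segment `s` a per-side symmetric stub length `t s` with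
`0 < t s ≤ len s / 2` (the maximal value meaning the full segment is drawn); a drawn part
covers a crossing point at distance `d` from the nearer endpoint iff `t s > d`, and
validity forbids both segments of a crossing pair to cover the crossing point.
The ink is `∑ s, 2 * t s`, and `L = 10·(3m) + 6·(3m) + 12·m = 60·m` counts 10 for each
variable red-green pair, 6 for each wire pair and 12 for each clause gadget. -/

/-- The segments of `Γ_φ`: variable-gadget segments (occurrence, red?), wire segments
(occurrence, second?), and clause segments. -/
abbrev RSeg (m : ℕ) :=
  (Fin m × Fin 3 × Bool) ⊕ (Fin m × Fin 3 × Bool) ⊕ (Fin m × Fin 3)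

def vseg {m : ℕ} (j : Fin m) (k : Fin 3) (red : Bool) : RSeg m := Sum.inl (j, k, red)
def wseg {m : ℕ} (j : Fin m) (k : Fin 3) (snd : Bool) : RSeg m := Sum.inr (Sum.inl (j, k, snd))
def cseg {m : ℕ} (j : Fin m) (k : Fin 3) : RSeg m := Sum.inr (Sum.inr (j, k))

/-- Segment lengths: 8 for variable and clause segments, 4 for wire segments. -/
def rlen {m : ℕ} : RSeg m → ℝ
  | Sum.inl _ => 8
  | Sum.inr (Sum.inl _) => 4
  | Sum.inr (Sum.inr _) => 8

/-!
Segments that pairwise cross at distance `d` from their endpoints can have at most one member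
longer than `d` on each side, so a variable pair contributes at most `2 (4 + 1) = 10`, a wire
pair at most `2 (2 + 1) = 6` and a clause triangle at most `2 (4 + 1 + 1) = 12`; these bounds add
up to `L`. A satisfying assignment attains all of them simultaneously: draw in full the variable
segments of the assigned colour, the wire segment next to the variable for a true literal and the
one next to the clause for a false literal, and in each clause the segment of one true literal.
Conversely, ink `L` makes every bound tight, so each variable pair is one full segment and one
stub; since a full red segment crosses the green segment of the next pair at distance `1`, the
state propagates around the cycle of the variable gadget.
-/

open Finset

section Cliques

variable {α : Type*} [Field α] [LinearOrder α] [IsStrictOrderedRing α] {a b c d : α}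

lemma add_le_of_not_and_lt (ha : a ≤ c) (hb : b ≤ c) (h : ¬ (d < a ∧ d < b)) :
    a + b ≤ c + d := by
  rcases not_and_or.1 h with h | h <;> push Not at h <;> linarith

lemma eq_and_eq_or_eq_and_eq_of_add_eq (ha : a ≤ c) (hb : b ≤ c) (h : ¬ (d < a ∧ d < b))
    (hab : a + b = c + d) : (a = d ∧ b = c) ∨ (a = c ∧ b = d) := by
  rcases not_and_or.1 h with h | h <;> push Not at h
  · exact .inl ⟨by linarith, by linarith⟩
  · exact .inr ⟨by linarith, by linarith⟩

lemma sum_le_of_pairwise_not_lt {ι : Type*} [Fintype ι] {f : ι → α}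
    (hdc : d ≤ c) (hf : ∀ i, f i ≤ c) (h : ∀ i j, i ≠ j → ¬ (d < f i ∧ d < f j)) :
    ∑ i, f i ≤ c - d + Fintype.card ι * d := by
  classical
  by_cases hex : ∃ i, d < f i
  · obtain ⟨i, hi⟩ := hex
    have hrest : ∀ j ∈ univ.erase i, f j ≤ d := fun j hj =>
      not_lt.1 fun hj' => h i j (ne_of_mem_erase hj).symm ⟨hi, hj'⟩
    calc ∑ j, f j = f i + ∑ j ∈ univ.erase i, f j := (add_sum_erase _ _ (mem_univ i)).symm
      _ ≤ c + ∑ _j ∈ univ.erase i, d := add_le_add (hf i) (sum_le_sum hrest)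
      _ = c - d + Fintype.card ι * d := by
        rw [sum_const, card_erase_of_mem (mem_univ i), card_univ, nsmul_eq_mul,
          Nat.cast_pred (Fintype.card_pos_iff.2 ⟨i⟩)]
        ring
  · push Not at hex
    calc ∑ i, f i ≤ ∑ _i : ι, d := sum_le_sum fun i _ => hex i
      _ ≤ c - d + Fintype.card ι * d := by rw [sum_const, card_univ, nsmul_eq_mul]; linarith

end Cliques

lemma eq_of_sum_add_sum_le {ι κ M : Type*} [Fintype ι] [Fintype κ] [AddCommMonoid M]
    [PartialOrder M] [IsOrderedCancelAddMonoid M] {f F : ι → M} {g G : κ → M}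
    (hf : ∀ i, f i ≤ F i) (hg : ∀ k, g k ≤ G k)
    (h : ∑ i, F i + ∑ k, G k ≤ ∑ i, f i + ∑ k, g k) :
    (∀ i, f i = F i) ∧ ∀ k, g k = G k := by
  have hfF : ∑ i, f i ≤ ∑ i, F i := sum_le_sum fun i _ => hf i
  have hgG : ∑ k, g k ≤ ∑ k, G k := sum_le_sum fun k _ => hg k
  have hFf : ∑ i, F i ≤ ∑ i, f i := le_of_add_le_add_right (h.trans (add_le_add le_rfl hgG))
  have hGg : ∑ k, G k ≤ ∑ k, g k := le_of_add_le_add_left (h.trans (add_le_add hfF le_rfl))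
  exact ⟨fun i => (sum_eq_sum_iff_of_le fun i _ => hf i).1 (hfF.antisymm hFf) i (mem_univ i),
    fun k => (sum_eq_sum_iff_of_le fun k _ => hg k).1 (hgG.antisymm hGg) k (mem_univ k)⟩

lemma Equiv.Perm.SameCycle.of_forall_imp_apply {β : Type*} [Finite β] {π : Equiv.Perm β}
    {P : β → Prop} (hP : ∀ x, P x → P (π x)) {x y : β} (hxy : π.SameCycle x y) (hx : P x) :
    P y := by
  obtain ⟨i, -, rfl⟩ := hxy.exists_pow_eq'
  rw [Equiv.Perm.coe_pow]
  exact Function.Iterate.rec P hx hP i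

lemma sum_rseg {M : Type*} [AddCommMonoid M] {m : ℕ} (f : RSeg m → M) :
    ∑ s, f s = ∑ p : Fin m × Fin 3,
      ((f (vseg p.1 p.2 false) + f (vseg p.1 p.2 true)) +
        (f (wseg p.1 p.2 false) + f (wseg p.1 p.2 true))) + ∑ j, ∑ k, f (cseg j k) := by
  simp only [Fintype.sum_sum_type, Fintype.sum_prod_type, Fintype.sum_bool, vseg, wseg, cseg,
    sum_add_distrib]
  abel

variable {n m : ℕ}

structure IsSPED (lit : Fin m → Fin 3 → Fin n × Bool) (π : Equiv.Perm (Fin m × Fin 3))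
    (t : RSeg m → ℝ) : Prop where
  bounds : ∀ s, 0 < t s ∧ t s ≤ rlen s / 2
  var_pair : ∀ j k, ¬ (1 < t (vseg j k false) ∧ 1 < t (vseg j k true))
  var_cycle : ∀ j k, ¬ (1 < t (vseg j k true) ∧ 1 < t (vseg (π (j, k)).1 (π (j, k)).2 false))
  wire_var : ∀ j k, ¬ (1 < t (wseg j k false) ∧ 3 < t (vseg j k (!(lit j k).2)))
  wire_pair : ∀ j k, ¬ (1 < t (wseg j k false) ∧ 1 < t (wseg j k true))
  wire_clause : ∀ j k, ¬ (1 < t (wseg j k true) ∧ 3 < t (cseg j k))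
  clause : ∀ j k k', k ≠ k' → ¬ (1 < t (cseg j k) ∧ 1 < t (cseg j k'))

section Assignment

variable (lit : Fin m → Fin 3 → Fin n × Bool) (σ : Fin n → Bool) (k₀ : Fin m → Fin 3)

/-- The red segment of an occurrence of `x` is the full one iff `σ x = true`, and
`σ x == b` is the truth value of the literal `(x, b)`. -/
def spedOfAssignment : RSeg m → ℝ
  | Sum.inl (j, k, red) => if red = σ (lit j k).1 then 4 else 1
  | Sum.inr (Sum.inl (j, k, snd)) => if snd = (σ (lit j k).1 == (lit j k).2) then 1 else 2
  | Sum.inr (Sum.inr (j, k)) => if k = k₀ j then 4 else 1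

@[simp] lemma spedOfAssignment_vseg (j k red) :
    spedOfAssignment lit σ k₀ (vseg j k red) = if red = σ (lit j k).1 then 4 else 1 := rfl

@[simp] lemma spedOfAssignment_wseg (j k snd) :
    spedOfAssignment lit σ k₀ (wseg j k snd) =
      if snd = (σ (lit j k).1 == (lit j k).2) then 1 else 2 := rfl

@[simp] lemma spedOfAssignment_cseg (j k) :
    spedOfAssignment lit σ k₀ (cseg j k) = if k = k₀ j then 4 else 1 := rfl

lemma sum_spedOfAssignment : ∑ s, spedOfAssignment lit σ k₀ s = 30 * m := by
  have hpair : ∀ b : Bool, ∀ x y : ℝ,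
      ((if false = b then x else y) + if true = b then x else y) = x + y := by
    intro b x y; cases b <;> simp [add_comm]
  have hclause : ∀ j, ∑ k, spedOfAssignment lit σ k₀ (cseg j k) = 6 := by
    intro j
    simp only [spedOfAssignment_cseg, Fin.sum_univ_three]
    generalize k₀ j = i
    fin_cases i <;> norm_num [Fin.ext_iff]
  simp only [sum_rseg, spedOfAssignment_vseg, spedOfAssignment_wseg, hpair, hclause, sum_const,
    card_univ, Fintype.card_prod, Fintype.card_fin, nsmul_eq_mul, Nat.cast_mul, Nat.cast_ofNat]
  ring

variable {lit σ k₀}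

lemma isSPED_spedOfAssignment {π : Equiv.Perm (Fin m × Fin 3)}
    (hπvar : ∀ p, (lit (π p).1 (π p).2).1 = (lit p.1 p.2).1)
    (hk₀ : ∀ j, σ (lit j (k₀ j)).1 = (lit j (k₀ j)).2) :
    IsSPED lit π (spedOfAssignment lit σ k₀) where
  bounds := by
    rintro (⟨j, k, c⟩ | ⟨j, k, c⟩ | ⟨j, k⟩) <;> simp only [spedOfAssignment, rlen] <;>
      split_ifs <;> norm_num
  var_pair j k := by cases hσ : σ (lit j k).1 <;> simp [hσ]
  var_cycle j k := by
    simp only [spedOfAssignment_vseg, hπvar (j, k)]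
    cases σ (lit j k).1 <;> simp
  wire_var j k := by cases hσ : σ (lit j k).1 <;> cases hb : (lit j k).2 <;> simp [hσ, hb]
  wire_pair j k := by cases hσ : σ (lit j k).1 <;> cases hb : (lit j k).2 <;> simp [hσ, hb]
  wire_clause j k := by
    by_cases hk : k = k₀ j
    · subst hk; simp [hk₀]
    · simp [hk]
  clause j k k' hkk' := by
    by_cases hk : k = k₀ j
    · subst hk; simp [Ne.symm hkk']
    · simp [hk]

end Assignment

namespace IsSPED

variable {lit : Fin m → Fin 3 → Fin n × Bool} {π : Equiv.Perm (Fin m × Fin 3)}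
  {t : RSeg m → ℝ}

lemma vseg_le (h : IsSPED lit π t) (j k red) : t (vseg j k red) ≤ 4 :=
  (h.bounds (vseg j k red)).2.trans_eq (by norm_num [vseg, rlen])

lemma wseg_le (h : IsSPED lit π t) (j k snd) : t (wseg j k snd) ≤ 2 :=
  (h.bounds (wseg j k snd)).2.trans_eq (by norm_num [wseg, rlen])

lemma cseg_le (h : IsSPED lit π t) (j k) : t (cseg j k) ≤ 4 :=
  (h.bounds (cseg j k)).2.trans_eq (by norm_num [cseg, rlen])

lemma var_pair_le (h : IsSPED lit π t) (j k) : t (vseg j k false) + t (vseg j k true) ≤ 5 := by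
  linarith [add_le_of_not_and_lt (h.vseg_le j k false) (h.vseg_le j k true) (h.var_pair j k)]

lemma wire_pair_le (h : IsSPED lit π t) (j k) : t (wseg j k false) + t (wseg j k true) ≤ 3 := by
  linarith [add_le_of_not_and_lt (h.wseg_le j k false) (h.wseg_le j k true) (h.wire_pair j k)]

lemma clause_le (h : IsSPED lit π t) (j) : ∑ k, t (cseg j k) ≤ 6 := by
  have := sum_le_of_pairwise_not_lt (by norm_num : (1 : ℝ) ≤ 4) (h.cseg_le j) (h.clause j)
  norm_num at this; linarith

lemma eq_of_le_sum (h : IsSPED lit π t) (hsum : 30 * m ≤ ∑ s, t s) :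
    (∀ j k, t (vseg j k false) + t (vseg j k true) = 5) ∧
    (∀ j k, t (wseg j k false) + t (wseg j k true) = 3) ∧
    ∀ j, ∑ k, t (cseg j k) = 6 := by
  have hocc_le : ∀ p : Fin m × Fin 3, (t (vseg p.1 p.2 false) + t (vseg p.1 p.2 true)) +
      (t (wseg p.1 p.2 false) + t (wseg p.1 p.2 true)) ≤ 8 := fun p => by
    linarith [h.var_pair_le p.1 p.2, h.wire_pair_le p.1 p.2]
  obtain ⟨hocc, hclause⟩ := eq_of_sum_add_sum_le hocc_le h.clause_le
    (by
      rw [← sum_rseg]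
      simp only [sum_const, card_univ, Fintype.card_prod, Fintype.card_fin, nsmul_eq_mul]
      push_cast
      linarith)
  refine ⟨fun j k => ?_, fun j k => ?_, hclause⟩ <;>
    linarith [hocc (j, k), h.var_pair_le j k, h.wire_pair_le j k]

lemma var_state (h : IsSPED lit π t) {j k} (hjk : t (vseg j k false) + t (vseg j k true) = 5) :
    (t (vseg j k false) = 1 ∧ t (vseg j k true) = 4) ∨
      (t (vseg j k false) = 4 ∧ t (vseg j k true) = 1) :=
  eq_and_eq_or_eq_and_eq_of_add_eq (h.vseg_le j k false) (h.vseg_le j k true) (h.var_pair j k)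
    (by linarith)

/-- A full red segment forces the green segment of the next pair in the cycle to be a stub. -/
lemma vseg_true_eq_four_succ (h : IsSPED lit π t)
    (hvar : ∀ j k, t (vseg j k false) + t (vseg j k true) = 5) {p : Fin m × Fin 3}
    (hp : t (vseg p.1 p.2 true) = 4) : t (vseg (π p).1 (π p).2 true) = 4 := by
  rcases h.var_state (hvar (π p).1 (π p).2) with ⟨-, h4⟩ | ⟨h4, -⟩
  · exact h4
  · exact absurd ⟨by rw [hp]; norm_num, by rw [h4]; norm_num⟩ (h.var_cycle p.1 p.2)

lemma var_gadget_state (h : IsSPED lit π t)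
    (hπcyc : ∀ x : Fin n, π.IsCycleOn {p : Fin m × Fin 3 | (lit p.1 p.2).1 = x})
    (hvar : ∀ j k, t (vseg j k false) + t (vseg j k true) = 5) (x : Fin n) :
    (∀ j k, (lit j k).1 = x → t (vseg j k true) = 4 ∧ t (vseg j k false) = 1) ∨
      (∀ j k, (lit j k).1 = x → t (vseg j k true) = 1 ∧ t (vseg j k false) = 4) := by
  by_cases hex : ∃ p : Fin m × Fin 3, (lit p.1 p.2).1 = x ∧ t (vseg p.1 p.2 true) = 4
  · obtain ⟨p, hpx, hp⟩ := hex
    refine .inl fun j k hjk => ?_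
    have h4 : t (vseg j k true) = 4 :=
      ((hπcyc x).2 hpx (show (j, k) ∈ _ from hjk)).of_forall_imp_apply
        (P := fun q => t (vseg q.1 q.2 true) = 4) (fun _ => h.vseg_true_eq_four_succ hvar) hp
    rcases h.var_state (hvar j k) with ⟨h1, -⟩ | ⟨-, h1⟩
    · exact ⟨h4, h1⟩
    · norm_num [h4] at h1
  · push Not at hex
    refine .inr fun j k hjk => ?_
    rcases h.var_state (hvar j k) with ⟨-, h4⟩ | ⟨h4, h1⟩
    · exact absurd h4 (hex (j, k) hjk)
    · exact ⟨h1, h4⟩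

end IsSPED

theorem stmt_17 (n m : ℕ)
    (lit : Fin m → Fin 3 → Fin n × Bool)
    -- the cyclic successor of an occurrence within its variable gadget
    (π : Equiv.Perm (Fin m × Fin 3))
    (hπvar : ∀ p, (lit (π p).1 (π p).2).1 = (lit p.1 p.2).1)
    (hπcyc : ∀ x : Fin n, π.IsCycleOn {p : Fin m × Fin 3 | (lit p.1 p.2).1 = x})
    (valid : (RSeg m → ℝ) → Prop)
    (hvalid : ∀ t, valid t ↔
      ((∀ s, 0 < t s ∧ t s ≤ rlen s / 2) ∧
       -- red-green crossings inside a variable-gadget pair (distance 1 : 1)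
       (∀ j k, ¬ (1 < t (vseg j k false) ∧ 1 < t (vseg j k true))) ∧
       -- crossings between consecutive pairs of the variable cycle (distance 1 : 1)
       (∀ j k, ¬ (1 < t (vseg j k true) ∧
                  1 < t (vseg (π (j, k)).1 (π (j, k)).2 false))) ∧
       -- first wire segment crosses the variable segment of its literal (1 : 3 split)
       (∀ j k, ¬ (1 < t (wseg j k false) ∧ 3 < t (vseg j k (!(lit j k).2)))) ∧
       -- red-green crossing inside the wire pair (distance 1 : 1)
       (∀ j k, ¬ (1 < t (wseg j k false) ∧ 1 < t (wseg j k true))) ∧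
       -- last wire segment crosses its clause segment (1 : 3 split)
       (∀ j k, ¬ (1 < t (wseg j k true) ∧ 3 < t (cseg j k))) ∧
       -- the clause triangle: pairwise crossings (distance 1 : 1)
       (∀ j k k', k ≠ k' → ¬ (1 < t (cseg j k) ∧ 1 < t (cseg j k'))))
    )
    (ink : (RSeg m → ℝ) → ℝ) (hink : ∀ t, ink t = ∑ s, 2 * t s)
    (L : ℝ) (hL : L = 60 * m) :
    -- if φ is satisfiable, Γ_φ has a SPED of ink exactly L
    ((∃ σ : Fin n → Bool, ∀ j, ∃ k, σ (lit j k).1 = (lit j k).2) →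
      ∃ t, valid t ∧ ink t = L) ∧
    -- conversely, in any SPED of ink at least L every red-green pair and every clause
    -- gadget attains its maximum contribution, forcing each variable gadget into one of
    -- its two states
    (∀ t, valid t → L ≤ ink t →
      (∀ j k, 2 * (t (vseg j k false) + t (vseg j k true)) = 10) ∧
      (∀ j k, 2 * (t (wseg j k false) + t (wseg j k true)) = 6) ∧
      (∀ j, ∑ k, 2 * t (cseg j k) = 12) ∧
      (∀ x : Fin n,
        (∀ j k, (lit j k).1 = x → t (vseg j k true) = 4 ∧ t (vseg j k false) = 1) ∨
        (∀ j k, (lit j k).1 = x → t (vseg j k true) = 1 ∧ t (vseg j k false) = 4))) := by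
  have hsped : ∀ t, valid t ↔ IsSPED lit π t := fun t => (hvalid t).trans
    ⟨fun ⟨h₁, h₂, h₃, h₄, h₅, h₆, h₇⟩ => ⟨h₁, h₂, h₃, h₄, h₅, h₆, h₇⟩,
      fun ⟨h₁, h₂, h₃, h₄, h₅, h₆, h₇⟩ => ⟨h₁, h₂, h₃, h₄, h₅, h₆, h₇⟩⟩
  have hink' : ∀ t, ink t = 2 * ∑ s, t s := fun t => (hink t).trans (mul_sum ..).symm
  refine ⟨fun ⟨σ, hσ⟩ => ?_, fun t hv hLt => ?_⟩
  · choose k₀ hk₀ using hσ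
    refine ⟨_, (hsped _).2 (isSPED_spedOfAssignment hπvar hk₀), ?_⟩
    rw [hink', sum_spedOfAssignment, hL]
    ring
  · have h := (hsped t).1 hv
    obtain ⟨hvar, hwire, hclause⟩ := h.eq_of_le_sum (by rw [hink', hL] at hLt; linarith)
    exact ⟨fun j k => by rw [hvar]; norm_num, fun j k => by rw [hwire]; norm_num,
      fun j => by rw [← mul_sum, hclause]; norm_num, h.var_gadget_state hπcyc hvar⟩
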